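/- Let ρ be a density matrix on the bipartite space indexed by Fin d_A × Fin d_B. Then μ(ρ) = 0 if and only if ρ = ρ_A ⊗ ρ_B, the Kronecker product of its two marginals. -/

import Mathlib

open Matrix
open scoped Kronecker ComplexOrder

noncomputable section

/-- Partial trace over the second factor: `(margA ρ) i j = Σ_k ρ (i,k) (j,k)`. -/
def margA {α β : Type*} [Fintype β] (ρ : Matrix (α × β) (α × β) ℂ) : Matrix α α ℂ :=
  Matrix.of fun i j => ∑ k, ρ (i, k) (j, k)

/-- Partial trace over the first factor: `(margB ρ) k l = Σ_i ρ (i,k) (i,l)`. -/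
def margB {α β : Type*} [Fintype α] (ρ : Matrix (α × β) (α × β) ℂ) : Matrix β β ℂ :=
  Matrix.of fun k l => ∑ i, ρ (i, k) (i, l)

/-- The maximal correlation of a bipartite state: the supremum of `|tr(ρ (X ⊗ Yᴴ))|` over
`X`, `Y` with `tr(ρ_A X) = tr(ρ_B Y) = 0` and `tr(ρ_A X Xᴴ) = tr(ρ_B Y Yᴴ) = 1`. -/
def mu {α β : Type*} [Fintype α] [Fintype β] (ρ : Matrix (α × β) (α × β) ℂ) : ℝ :=
  sSup { r : ℝ | ∃ (X : Matrix α α ℂ) (Y : Matrix β β ℂ),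
    (margA ρ * X).trace = 0 ∧ (margB ρ * Y).trace = 0 ∧
    (margA ρ * X * Xᴴ).trace = 1 ∧ (margB ρ * Y * Yᴴ).trace = 1 ∧
    r = ‖(ρ * (X ⊗ₖ Yᴴ)).trace‖ }

section Aux

variable {α β : Type*} [Fintype α] [Fintype β] [DecidableEq α] [DecidableEq β]

set_option linter.unusedSectionVars false

open scoped MatrixOrder in
def Matrix.PosSemidef.sqrt {ι : Type*} [Fintype ι] [DecidableEq ι] {ρ : Matrix ι ι ℂ}
    (_ : ρ.PosSemidef) : Matrix ι ι ℂ := CFC.sqrt ρ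

open scoped MatrixOrder in
lemma Matrix.PosSemidef.sqrt_mul_self {ι : Type*} [Fintype ι] [DecidableEq ι]
    {ρ : Matrix ι ι ℂ} (hρ : ρ.PosSemidef) : hρ.sqrt * hρ.sqrt = ρ :=
  CFC.sqrt_mul_sqrt_self ρ hρ.nonneg

open scoped MatrixOrder in
lemma Matrix.PosSemidef.posSemidef_sqrt {ι : Type*} [Fintype ι] [DecidableEq ι]
    {ρ : Matrix ι ι ℂ} (hρ : ρ.PosSemidef) : hρ.sqrt.PosSemidef :=
  (CFC.sqrt_nonneg ρ).posSemidef

lemma traceA (ρ : Matrix (α×β) (α×β) ℂ) (X : Matrix α α ℂ) :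
    (ρ * (X ⊗ₖ (1 : Matrix β β ℂ))).trace = (margA ρ * X).trace := by
  simp only [Matrix.trace, Matrix.diag, Matrix.mul_apply, margA, Matrix.kroneckerMap_apply,
    Matrix.of_apply, Fintype.sum_prod_type, Matrix.one_apply, mul_ite, mul_one, mul_zero,
    Finset.sum_ite_eq, Finset.sum_ite_eq', Finset.mem_univ, if_true, Finset.sum_mul]
  exact Finset.sum_congr rfl fun i _ => Finset.sum_comm

lemma traceB (ρ : Matrix (α×β) (α×β) ℂ) (Y : Matrix β β ℂ) :
    (ρ * ((1 : Matrix α α ℂ) ⊗ₖ Y)).trace = (margB ρ * Y).trace := by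
  simp only [Matrix.trace, Matrix.diag, Matrix.mul_apply, margB, Matrix.kroneckerMap_apply,
    Matrix.of_apply, Fintype.sum_prod_type, Matrix.one_apply, ite_mul, one_mul, zero_mul,
    mul_ite, mul_zero, Finset.sum_mul]
  have h1 : ∀ (a : α) (k : β),
      (∑ c : α, ∑ d : β, if c = a then ρ (a,k) (c,d) * Y d k else 0)
        = ∑ d : β, ρ (a,k) (a,d) * Y d k := by
    intro a k
    rw [Finset.sum_comm]
    simp
  simp only [h1]
  rw [Finset.sum_comm]
  exact Finset.sum_congr rfl fun k _ => Finset.sum_comm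

lemma trace_margA (ρ : Matrix (α×β) (α×β) ℂ) : (margA ρ).trace = ρ.trace := by
  simp [margA, Matrix.trace, Matrix.diag, Fintype.sum_prod_type]

lemma conjTranspose_kron (A : Matrix α α ℂ) (B : Matrix β β ℂ) :
    (A ⊗ₖ B)ᴴ = Aᴴ ⊗ₖ Bᴴ := by
  ext p q
  simp only [Matrix.conjTranspose_apply, Matrix.kroneckerMap_apply]
  exact star_mul' _ _

lemma sub_kron (A B : Matrix α α ℂ) (C : Matrix β β ℂ) :
    (A - B) ⊗ₖ C = A ⊗ₖ C - B ⊗ₖ C := by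
  ext p q
  simp [Matrix.kroneckerMap_apply, sub_mul]

lemma kron_sub (A : Matrix α α ℂ) (B C : Matrix β β ℂ) :
    A ⊗ₖ (B - C) = A ⊗ₖ B - A ⊗ₖ C := by
  ext p q
  simp [Matrix.kroneckerMap_apply, mul_sub]

lemma conjT_std (k l : β) :
    (Matrix.single k l (1:ℂ))ᴴ = Matrix.single l k 1 := by
  ext a b
  simp [Matrix.conjTranspose_apply, Matrix.single, and_comm, apply_ite (star : ℂ → ℂ)]

lemma kron_std (j i : α) (l k : β) :
    (Matrix.single j i (1:ℂ)) ⊗ₖ (Matrix.single l k (1:ℂ))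
      = Matrix.single (j,l) (i,k) 1 := by
  ext p q
  obtain ⟨a,b⟩ := p; obtain ⟨c,d⟩ := q
  simp only [Matrix.kroneckerMap_apply, Matrix.single, Matrix.of_apply, Prod.mk.injEq]
  split_ifs <;> simp_all

lemma trace_mul_std {ι : Type*} [Fintype ι] [DecidableEq ι] (M : Matrix ι ι ℂ) (p q : ι) :
    (M * Matrix.single p q 1).trace = M q p := by
  simp [Matrix.trace, Matrix.diag, Matrix.mul_apply, Matrix.single, ite_and,
    mul_ite, mul_one, mul_zero, Finset.sum_ite_eq, Finset.sum_ite_eq']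

lemma trace_form {ι : Type*} [Fintype ι] [DecidableEq ι] {ρ : Matrix ι ι ℂ}
    (hρ : ρ.PosSemidef) (A B : Matrix ι ι ℂ) :
    (ρ * A * Bᴴ).trace = ∑ p, ∑ q, (hρ.sqrt * A) p q * star ((hρ.sqrt * B) p q) := by
  have hN : hρ.sqrt * hρ.sqrt = ρ := hρ.sqrt_mul_self
  have hH : hρ.sqrt.conjTranspose = hρ.sqrt := hρ.posSemidef_sqrt.1
  have h1 : ρ * A * Bᴴ = hρ.sqrt * (hρ.sqrt * A * Bᴴ) := by
    rw [← Matrix.mul_assoc, ← Matrix.mul_assoc, hN]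
  rw [h1, Matrix.trace_mul_comm]
  have h2 : hρ.sqrt * A * Bᴴ * hρ.sqrt = (hρ.sqrt * A) * (hρ.sqrt * B)ᴴ := by
    rw [Matrix.conjTranspose_mul, hH, Matrix.mul_assoc]
  rw [h2]
  simp only [Matrix.trace, Matrix.diag, Matrix.mul_apply, Matrix.conjTranspose_apply,
    Complex.star_def, map_sum, _root_.map_mul]

lemma trace_form_self {ι : Type*} [Fintype ι] [DecidableEq ι] {ρ : Matrix ι ι ℂ}
    (hρ : ρ.PosSemidef) (A : Matrix ι ι ℂ) :
    (ρ * A * Aᴴ).trace = ((∑ p, ∑ q, ‖(hρ.sqrt * A) p q‖ ^ 2 : ℝ) : ℂ) := by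
  rw [trace_form hρ A A]
  push_cast
  refine Finset.sum_congr rfl fun p _ => Finset.sum_congr rfl fun q _ => ?_
  rw [Complex.star_def, Complex.mul_conj, ← Complex.sq_norm]
  push_cast
  ring

lemma cs {ι : Type*} [Fintype ι] [DecidableEq ι] {ρ : Matrix ι ι ℂ} (hρ : ρ.PosSemidef)
    (A B : Matrix ι ι ℂ) :
    ‖(ρ * A * Bᴴ).trace‖
      ≤ Real.sqrt ((ρ * A * Aᴴ).trace.re) * Real.sqrt ((ρ * B * Bᴴ).trace.re) := by
  let v : EuclideanSpace ℂ (ι × ι) := WithLp.toLp 2 fun pq => (hρ.sqrt * A) pq.1 pq.2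
  let u : EuclideanSpace ℂ (ι × ι) := WithLp.toLp 2 fun pq => (hρ.sqrt * B) pq.1 pq.2
  have hinner : (ρ * A * Bᴴ).trace = inner ℂ u v := by
    rw [trace_form hρ A B]
    simp only [PiLp.inner_apply, RCLike.inner_apply, PiLp.toLp_apply, Fintype.sum_prod_type, u, v]
    exact Finset.sum_congr rfl fun p _ => Finset.sum_congr rfl fun q _ => by
      rfl
  have hv : ‖v‖ = Real.sqrt ((ρ * A * Aᴴ).trace.re) := by
    rw [EuclideanSpace.norm_eq, trace_form_self hρ A, Complex.ofReal_re]
    congr 1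
    simp only [Fintype.sum_prod_type, u, v, PiLp.toLp_apply]
  have hu : ‖u‖ = Real.sqrt ((ρ * B * Bᴴ).trace.re) := by
    rw [EuclideanSpace.norm_eq, trace_form_self hρ B, Complex.ofReal_re]
    congr 1
    simp only [Fintype.sum_prod_type, u, v, PiLp.toLp_apply]
  calc ‖(ρ * A * Bᴴ).trace‖ = ‖(inner ℂ u v : ℂ)‖ := by
        rw [hinner]
    _ ≤ ‖u‖ * ‖v‖ := norm_inner_le_norm u v
    _ = _ := by rw [hu, hv, mul_comm]

/-- `ρ (X ⊗ Yᴴ)` written as `ρ A Bᴴ` with `A = X ⊗ 1`, `B = 1 ⊗ Y`. -/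
lemma rho_AB (ρ : Matrix (α×β) (α×β) ℂ) (X : Matrix α α ℂ) (Y : Matrix β β ℂ) :
    ρ * (X ⊗ₖ Yᴴ)
      = ρ * (X ⊗ₖ (1 : Matrix β β ℂ)) * ((1 : Matrix α α ℂ) ⊗ₖ Y)ᴴ := by
  rw [Matrix.mul_assoc, conjTranspose_kron, Matrix.conjTranspose_one,
    ← Matrix.mul_kronecker_mul, Matrix.mul_one, Matrix.one_mul]

lemma rho_AA (ρ : Matrix (α×β) (α×β) ℂ) (X : Matrix α α ℂ) :
    (ρ * (X ⊗ₖ (1 : Matrix β β ℂ)) * (X ⊗ₖ (1 : Matrix β β ℂ))ᴴ).trace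
      = (margA ρ * X * Xᴴ).trace := by
  rw [Matrix.mul_assoc, conjTranspose_kron, Matrix.conjTranspose_one,
    ← Matrix.mul_kronecker_mul, Matrix.mul_one, traceA, Matrix.mul_assoc]

lemma rho_BB (ρ : Matrix (α×β) (α×β) ℂ) (Y : Matrix β β ℂ) :
    (ρ * ((1 : Matrix α α ℂ) ⊗ₖ Y) * ((1 : Matrix α α ℂ) ⊗ₖ Y)ᴴ).trace
      = (margB ρ * Y * Yᴴ).trace := by
  rw [Matrix.mul_assoc, conjTranspose_kron, Matrix.conjTranspose_one,
    ← Matrix.mul_kronecker_mul, Matrix.mul_one, traceB, Matrix.mul_assoc]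

end Aux

set_option maxHeartbeats 1000000 in
/-- The maximal correlation vanishes exactly on product states. -/
theorem mu_eq_zero_iff_product {dA dB : ℕ}
    (ρ : Matrix (Fin dA × Fin dB) (Fin dA × Fin dB) ℂ)
    (hρ : ρ.PosSemidef) (htr : ρ.trace = 1) :
    mu ρ = 0 ↔ ρ = margA ρ ⊗ₖ margB ρ := by
  set S := { r : ℝ | ∃ (X : Matrix (Fin dA) (Fin dA) ℂ) (Y : Matrix (Fin dB) (Fin dB) ℂ),
    (margA ρ * X).trace = 0 ∧ (margB ρ * Y).trace = 0 ∧
    (margA ρ * X * Xᴴ).trace = 1 ∧ (margB ρ * Y * Yᴴ).trace = 1 ∧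
    r = ‖(ρ * (X ⊗ₖ Yᴴ)).trace‖ } with hSdef
  have hmuS : mu ρ = sSup S := rfl
  constructor
  · -- μ = 0 → product
    intro hmu
    by_contra hne
    -- a nonzero entry of ρ - ρ_A ⊗ ρ_B
    have hex : ∃ p q, ρ p q ≠ (margA ρ ⊗ₖ margB ρ) p q := by
      by_contra h
      push_neg at h
      exact hne (by ext p q; exact h p q)
    obtain ⟨⟨i, k⟩, ⟨j, l⟩, hpq⟩ := hex
    set X₀ : Matrix (Fin dA) (Fin dA) ℂ := Matrix.single j i 1 with hX₀
    set Y₀ : Matrix (Fin dB) (Fin dB) ℂ := Matrix.single k l 1 with hY₀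
    set a : ℂ := (margA ρ * X₀).trace with ha
    set b : ℂ := (margB ρ * Y₀).trace with hb
    set X : Matrix (Fin dA) (Fin dA) ℂ := X₀ - a • 1 with hX
    set Y : Matrix (Fin dB) (Fin dB) ℂ := Y₀ - b • 1 with hY
    have htrA : (margA ρ).trace = 1 := by rw [trace_margA, htr]
    have htrB : (margB ρ).trace = 1 := by
      have := trace_margA ρ
      -- compute trace of margB directly
      have h2 : (margB ρ).trace = ρ.trace := by
        simp [margB, Matrix.trace, Matrix.diag, Fintype.sum_prod_type]
        rw [Finset.sum_comm]
      rw [h2, htr]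
    have hXtr : (margA ρ * X).trace = 0 := by
      rw [hX, Matrix.mul_sub, Matrix.trace_sub, Matrix.mul_smul, Matrix.mul_one,
        Matrix.trace_smul, htrA, ← ha]
      simp
    have hYtr : (margB ρ * Y).trace = 0 := by
      rw [hY, Matrix.mul_sub, Matrix.trace_sub, Matrix.mul_smul, Matrix.mul_one,
        Matrix.trace_smul, htrB, ← hb]
      simp
    -- the key value c
    have hT : (ρ * (X₀ ⊗ₖ Y₀ᴴ)).trace = ρ (i,k) (j,l) := by
      rw [hX₀, hY₀, conjT_std, kron_std, trace_mul_std]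
    have haval : a = margA ρ i j := by rw [ha, hX₀, trace_mul_std]
    have hbval : (margB ρ * Y₀ᴴ).trace = margB ρ k l := by
      rw [hY₀, conjT_std, trace_mul_std]
    have hc : (ρ * (X ⊗ₖ Yᴴ)).trace
        = ρ (i,k) (j,l) - margA ρ i j * margB ρ k l := by
      have hYH : Yᴴ = Y₀ᴴ - star b • (1 : Matrix (Fin dB) (Fin dB) ℂ) := by
        rw [hY, Matrix.conjTranspose_sub, Matrix.conjTranspose_smul,
          Matrix.conjTranspose_one]
      rw [hX, hYH, sub_kron, kron_sub, kron_sub]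
      rw [Matrix.smul_kronecker, Matrix.smul_kronecker, Matrix.kronecker_smul,
        Matrix.kronecker_smul, Matrix.one_kronecker_one]
      rw [Matrix.mul_sub, Matrix.mul_sub, Matrix.mul_sub]
      rw [Matrix.trace_sub, Matrix.trace_sub, Matrix.trace_sub]
      rw [Matrix.mul_smul, Matrix.mul_smul, Matrix.mul_smul, Matrix.mul_smul]
      rw [Matrix.trace_smul, Matrix.trace_smul, Matrix.trace_smul, Matrix.trace_smul,
        Matrix.mul_one]
      rw [hT, traceA, traceB, hbval, htr, ← ha]
      rw [haval]
      simp only [smul_eq_mul, mul_one]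
      ring
    have hcne : (ρ * (X ⊗ₖ Yᴴ)).trace ≠ 0 := by
      rw [hc]
      intro h0
      apply hpq
      rw [Matrix.kroneckerMap_apply]
      have := sub_eq_zero.mp h0
      simpa using this
    -- A and B
    set A : Matrix (Fin dA × Fin dB) (Fin dA × Fin dB) ℂ := X ⊗ₖ (1 : Matrix (Fin dB) (Fin dB) ℂ) with hA
    set B : Matrix (Fin dA × Fin dB) (Fin dA × Fin dB) ℂ := (1 : Matrix (Fin dA) (Fin dA) ℂ) ⊗ₖ Y with hB
    have hABtr : (ρ * (X ⊗ₖ Yᴴ)).trace = (ρ * A * Bᴴ).trace := by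
      rw [hA, hB, ← rho_AB]
    set sa : ℝ := ∑ p, ∑ q, ‖(hρ.sqrt * A) p q‖ ^ 2 with hsa
    set tb : ℝ := ∑ p, ∑ q, ‖(hρ.sqrt * B) p q‖ ^ 2 with htb
    have hsa0 : 0 ≤ sa := Finset.sum_nonneg fun p _ => Finset.sum_nonneg fun q _ => sq_nonneg _
    have htb0 : 0 ≤ tb := Finset.sum_nonneg fun p _ => Finset.sum_nonneg fun q _ => sq_nonneg _
    have hAA : (ρ * A * Aᴴ).trace = (sa : ℂ) := trace_form_self hρ A
    have hBB : (ρ * B * Bᴴ).trace = (tb : ℂ) := trace_form_self hρ B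
    have hcs := cs hρ A B
    rw [hAA, hBB, Complex.ofReal_re, Complex.ofReal_re] at hcs
    have hsane : sa ≠ 0 := by
      intro h0
      rw [h0] at hcs
      simp only [Real.sqrt_zero, zero_mul] at hcs
      exact hcne (by
        rw [hABtr]
        exact norm_eq_zero.mp (le_antisymm hcs (norm_nonneg _)))
    have htbne : tb ≠ 0 := by
      intro h0
      rw [h0] at hcs
      simp only [Real.sqrt_zero, mul_zero] at hcs
      exact hcne (by
        rw [hABtr]
        exact norm_eq_zero.mp (le_antisymm hcs (norm_nonneg _)))
    have hsapos : 0 < sa := lt_of_le_of_ne hsa0 (Ne.symm hsane)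
    have htbpos : 0 < tb := lt_of_le_of_ne htb0 (Ne.symm htbne)
    -- rescale
    set cX : ℂ := (((Real.sqrt sa)⁻¹ : ℝ) : ℂ) with hcX
    set cY : ℂ := (((Real.sqrt tb)⁻¹ : ℝ) : ℂ) with hcY
    set X' : Matrix (Fin dA) (Fin dA) ℂ := cX • X with hX'
    set Y' : Matrix (Fin dB) (Fin dB) ℂ := cY • Y with hY'
    have hsaX : (margA ρ * X * Xᴴ).trace = (sa : ℂ) := by
      rw [← rho_AA, ← hA, hAA]
    have htbY : (margB ρ * Y * Yᴴ).trace = (tb : ℂ) := by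
      rw [← rho_BB, ← hB, hBB]
    have hm1 : (margA ρ * X').trace = 0 := by
      rw [hX', Matrix.mul_smul, Matrix.trace_smul, hXtr, smul_zero]
    have hm2 : (margB ρ * Y').trace = 0 := by
      rw [hY', Matrix.mul_smul, Matrix.trace_smul, hYtr, smul_zero]
    have hsqsa : (Real.sqrt sa)⁻¹ * (Real.sqrt sa)⁻¹ * sa = 1 := by
      rw [← mul_inv, Real.mul_self_sqrt hsa0]
      exact inv_mul_cancel₀ hsane
    have hsqtb : (Real.sqrt tb)⁻¹ * (Real.sqrt tb)⁻¹ * tb = 1 := by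
      rw [← mul_inv, Real.mul_self_sqrt htb0]
      exact inv_mul_cancel₀ htbne
    have hcXne : cX ≠ 0 := by
      rw [hcX]
      simp only [ne_eq, Complex.ofReal_eq_zero, inv_eq_zero]
      exact Real.sqrt_ne_zero'.mpr hsapos
    have hm3 : (margA ρ * X' * X'ᴴ).trace = 1 := by
      rw [hX', Matrix.conjTranspose_smul, Matrix.mul_smul, Matrix.mul_smul,
        Matrix.smul_mul, Matrix.trace_smul, Matrix.trace_smul, hsaX]
      rw [hcX, Complex.star_def, Complex.conj_ofReal, smul_eq_mul, smul_eq_mul]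
      norm_cast
      rw [← mul_assoc]
      exact hsqsa
    have hm4 : (margB ρ * Y' * Y'ᴴ).trace = 1 := by
      rw [hY', Matrix.conjTranspose_smul, Matrix.mul_smul, Matrix.mul_smul,
        Matrix.smul_mul, Matrix.trace_smul, Matrix.trace_smul, htbY]
      rw [hcY, Complex.star_def, Complex.conj_ofReal, smul_eq_mul, smul_eq_mul]
      norm_cast
      rw [← mul_assoc]
      exact hsqtb
    have hval : (ρ * (X' ⊗ₖ Y'ᴴ)).trace = cX * cY * (ρ * (X ⊗ₖ Yᴴ)).trace := by
      rw [hX', hY', Matrix.conjTranspose_smul, Matrix.smul_kronecker,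
        Matrix.kronecker_smul, Matrix.mul_smul, Matrix.mul_smul,
        Matrix.trace_smul, Matrix.trace_smul]
      rw [hcY, Complex.star_def, Complex.conj_ofReal, smul_eq_mul, smul_eq_mul]
      ring
    set r' : ℝ := ‖(ρ * (X' ⊗ₖ Y'ᴴ)).trace‖ with hr'
    have hcYne : cY ≠ 0 := by
      rw [hcY]
      simp only [ne_eq, Complex.ofReal_eq_zero, inv_eq_zero]
      exact Real.sqrt_ne_zero'.mpr htbpos
    have hr'pos : 0 < r' := by
      rw [hr']
      apply norm_pos_iff.mpr
      rw [hval]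
      exact mul_ne_zero (mul_ne_zero hcXne hcYne) hcne
    have hmem : r' ∈ S := ⟨X', Y', hm1, hm2, hm3, hm4, rfl⟩
    have hbdd : BddAbove S := by
      refine ⟨1, ?_⟩
      rintro r ⟨X1, Y1, _, _, h3, h4, rfl⟩
      have e1 : (ρ * (X1 ⊗ₖ Y1ᴴ)).trace
          = (ρ * (X1 ⊗ₖ (1 : Matrix (Fin dB) (Fin dB) ℂ))
              * ((1 : Matrix (Fin dA) (Fin dA) ℂ) ⊗ₖ Y1)ᴴ).trace := by
        rw [← rho_AB]
      have e2 : (ρ * (X1 ⊗ₖ (1 : Matrix (Fin dB) (Fin dB) ℂ))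
          * (X1 ⊗ₖ (1 : Matrix (Fin dB) (Fin dB) ℂ))ᴴ).trace = 1 := by
        rw [rho_AA, h3]
      have e3 : (ρ * ((1 : Matrix (Fin dA) (Fin dA) ℂ) ⊗ₖ Y1)
          * ((1 : Matrix (Fin dA) (Fin dA) ℂ) ⊗ₖ Y1)ᴴ).trace = 1 := by
        rw [rho_BB, h4]
      have hb := cs hρ (X1 ⊗ₖ (1 : Matrix (Fin dB) (Fin dB) ℂ))
        ((1 : Matrix (Fin dA) (Fin dA) ℂ) ⊗ₖ Y1)
      rw [e2, e3, Complex.one_re, Real.sqrt_one, mul_one] at hb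
      rw [e1]
      exact hb
    have hle := le_csSup hbdd hmem
    rw [← hmuS, hmu] at hle
    linarith
  · -- product → μ = 0
    intro hprod
    have hS0 : ∀ r ∈ S, r = 0 := by
      rintro r ⟨X, Y, h1, _, _, _, rfl⟩
      have : ρ * (X ⊗ₖ Yᴴ) = (margA ρ * X) ⊗ₖ (margB ρ * Yᴴ) := by
        nth_rewrite 1 [hprod]
        rw [Matrix.mul_kronecker_mul]
      rw [this, Matrix.trace_kronecker, h1, zero_mul]
      simp
    have hsub : S ⊆ {0} := fun r hr => hS0 r hr
    rcases Set.subset_singleton_iff_eq.mp hsub with h | h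
    · rw [hmuS, h, Real.sSup_empty]
    · rw [hmuS, h, csSup_singleton]

end
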